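/- arXiv:1308.4153 — 4 statements merged into one kernel-verified Lean document; each statement's English description precedes it below -/
import Mathlib

section
/- For any n ≥ 1 and positive reals X₁, ..., Xₙ, the integral over the positive orthant ∫_{[0,∞)^n} n!·X₁⋯Xₙ / (1 + a₁X₁ + ⋯ + aₙXₙ)^{n+1} da₁⋯daₙ equals 1. -/
/-!
Integrate out one coordinate at a time. The statement is generalised to a free shift `t > 0`
and a free excess `k` in the exponent:
`∫_{[0,∞)^n} ∏ Xᵢ / (t + ∑ aᵢ Xᵢ)^(n+k+1) da = k! / ((n+k)! t^(k+1))`.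
Integrating over `a₁, …, aₙ` first (induction, with `t` replaced by `t + a₀X₀` and `k` by
`k + 1`) leaves the elementary integral of `X₀ / (t + a₀X₀)^(k+2)` over `a₀ ≥ 0`.
The theorem is the case `t = 1`, `k = 0`. Lower Lebesgue integrals make Tonelli available
without integrability side conditions.
-/

open MeasureTheory Set Filter Topology

theorem lintegral_pi_fin_succ {n : ℕ} {α : Fin (n + 1) → Type*} [∀ i, MeasurableSpace (α i)]
    (μ : ∀ i, Measure (α i)) [∀ i, SigmaFinite (μ i)] {f : (∀ i, α i) → ENNReal}
    (hf : Measurable f) :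
    ∫⁻ a, f a ∂Measure.pi μ =
      ∫⁻ x, ∫⁻ y, f (Fin.cons x y) ∂Measure.pi (fun i => μ i.succ) ∂μ 0 := by
  set e := (MeasurableEquiv.piFinSuccAbove α 0).symm
  rw [← (measurePreserving_piFinSuccAbove μ 0).symm.lintegral_comp_emb e.measurableEmbedding]
  refine (lintegral_prod (f ∘ e) (hf.comp e.measurable).aemeasurable).trans ?_
  simp only [e, MeasurableEquiv.piFinSuccAbove_symm_apply, Fin.insertNthEquiv, Equiv.coe_fn_mk,
    Fin.insertNth_zero, Function.comp_apply]
  rfl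

theorem hasDerivAt_neg_inv_mul_add_mul_pow {t c x : ℝ} (m : ℕ) (hx : t + x * c ≠ 0) :
    HasDerivAt (fun x => -((m + 1) * (t + x * c) ^ (m + 1))⁻¹)
      (c / (t + x * c) ^ (m + 2)) x := by
  have hlin : HasDerivAt (fun x => t + x * c) c x := by
    simpa using ((hasDerivAt_id x).mul_const c).const_add t
  have hpow := ((hlin.fun_pow (m + 1)).const_mul ((m : ℝ) + 1)).fun_inv
    (by positivity : ((m : ℝ) + 1) * (t + x * c) ^ (m + 1) ≠ 0)
  refine hpow.fun_neg.congr_deriv ?_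
  rw [Nat.add_sub_cancel]
  push_cast
  field_simp
  ring

theorem lintegral_Ici_div_add_mul_pow {t c : ℝ} (ht : 0 < t) (hc : 0 < c) (m : ℕ) :
    ∫⁻ x in Ici 0, ENNReal.ofReal (c / (t + x * c) ^ (m + 2)) =
      ENNReal.ofReal ((m + 1) * t ^ (m + 1))⁻¹ := by
  have hpos : ∀ x ∈ Ici (0 : ℝ), 0 < t + x * c := fun x hx => by
    have : 0 ≤ x * c := mul_nonneg hx hc.le
    linarith
  have hderiv : ∀ x ∈ Ici (0 : ℝ),
      HasDerivAt (fun x => -((m + 1) * (t + x * c) ^ (m + 1))⁻¹) (c / (t + x * c) ^ (m + 2)) x :=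
    fun x hx => hasDerivAt_neg_inv_mul_add_mul_pow m (hpos x hx).ne'
  have hnonneg : ∀ x ∈ Ioi (0 : ℝ), 0 ≤ c / (t + x * c) ^ (m + 2) :=
    fun x hx => by have := hpos x (mem_Ici_of_Ioi hx); positivity
  have hlim : Tendsto (fun x => -((m + 1) * (t + x * c) ^ (m + 1))⁻¹) atTop (𝓝 0) := by
    have hlin : Tendsto (fun x => t + x * c) atTop atTop :=
      tendsto_atTop_add_const_left _ t (tendsto_id.atTop_mul_const hc)
    simpa using (((tendsto_pow_atTop m.succ_ne_zero).comp hlin).const_mul_atTop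
      (by positivity : (0 : ℝ) < m + 1)).inv_tendsto_atTop.neg
  rw [← Measure.restrict_congr_set Ioi_ae_eq_Ici, ← ofReal_integral_eq_lintegral_ofReal
    (integrableOn_Ioi_deriv_of_nonneg' hderiv hnonneg hlim)
    ((ae_restrict_mem measurableSet_Ioi).mono hnonneg),
    integral_Ioi_of_hasDerivAt_of_nonneg' hderiv hnonneg hlim]
  simp

open Nat in
theorem lintegral_pi_Ici_prod_div_add_sum_pow (n k : ℕ) {X : Fin n → ℝ} (hX : ∀ i, 0 < X i)
    {t : ℝ} (ht : 0 < t) :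
    ∫⁻ a, ENNReal.ofReal ((∏ i, X i) / (t + ∑ i, a i * X i) ^ (n + k + 1))
        ∂Measure.pi (fun _ => volume.restrict (Ici 0)) =
      ENNReal.ofReal (k ! / ((n + k)! * t ^ (k + 1))) := by
  induction n generalizing k t with
  | zero =>
    simp only [Fin.prod_univ_zero, Fin.sum_univ_zero, add_zero, zero_add, lintegral_const,
      Measure.pi_empty_univ, mul_one]
    congr 1
    field_simp
  | succ n ih =>
    rw [lintegral_pi_fin_succ _ (by fun_prop)]
    simp only [Fin.prod_univ_succ, Fin.sum_univ_succ, Fin.cons_zero, Fin.cons_succ]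
    have inner : ∀ x ∈ Ici (0 : ℝ),
        ∫⁻ y, ENNReal.ofReal ((X 0 * ∏ i : Fin n, X i.succ) /
            (t + (x * X 0 + ∑ i : Fin n, y i * X i.succ)) ^ (n + 1 + k + 1))
          ∂Measure.pi (fun _ => volume.restrict (Ici 0)) =
        ENNReal.ofReal ((k + 1)! / (n + k + 1)!) *
          ENNReal.ofReal (X 0 / (t + x * X 0) ^ (k + 2)) := by
      intro x hx
      have hx0 : 0 < t + x * X 0 := by have := mul_nonneg (mem_Ici.1 hx) (hX 0).le; linarith
      calc _ = ∫⁻ y, ENNReal.ofReal (X 0) * ENNReal.ofReal ((∏ i : Fin n, X i.succ) /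
              (t + x * X 0 + ∑ i : Fin n, y i * X i.succ) ^ (n + (k + 1) + 1))
              ∂Measure.pi (fun _ => volume.restrict (Ici 0)) := by
            refine lintegral_congr fun y => ?_
            rw [← ENNReal.ofReal_mul (hX 0).le, mul_div_assoc, add_assoc t,
              show n + 1 + k + 1 = n + (k + 1) + 1 by omega]
        _ = _ := by
            rw [lintegral_const_mul _ (by fun_prop), ih _ (fun i => hX i.succ) hx0,
              ← ENNReal.ofReal_mul (hX 0).le, ← ENNReal.ofReal_mul (by positivity)]
            congr 1
            rw [← add_assoc]
            field_simp
    rw [setLIntegral_congr_fun measurableSet_Ici inner, lintegral_const_mul _ (by fun_prop),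
      lintegral_Ici_div_add_mul_pow ht (hX 0) k, ← ENNReal.ofReal_mul (by positivity)]
    congr 1
    rw [show n + 1 + k = n + k + 1 by omega, Nat.factorial_succ k]
    push_cast
    field_simp

theorem stmt7_general (n : ℕ) (X : Fin n → ℝ) (hX : ∀ i, 0 < X i) :
    ∫ a in Set.univ.pi (fun _ : Fin n => Set.Ici (0 : ℝ)),
        (n.factorial : ℝ) * (∏ i, X i) / (1 + ∑ i, a i * X i) ^ (n + 1) = 1 := by
  have hnonneg : ∀ a ∈ Set.univ.pi (fun _ : Fin n => Set.Ici (0 : ℝ)),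
      0 ≤ (n.factorial : ℝ) * (∏ i, X i) / (1 + ∑ i, a i * X i) ^ (n + 1) := fun a ha => by
    have : 0 ≤ ∑ i, a i * X i :=
      Finset.sum_nonneg fun i _ => mul_nonneg (ha i (mem_univ i)) (hX i).le
    have : 0 < ∏ i, X i := Finset.prod_pos fun i _ => hX i
    positivity
  rw [integral_eq_lintegral_of_nonneg_ae
    ((ae_restrict_mem (MeasurableSet.univ_pi fun _ => measurableSet_Ici)).mono hnonneg)
    (by fun_prop : Measurable _).aestronglyMeasurable, volume_pi, Measure.restrict_pi_pi]
  simp_rw [mul_div_assoc, ENNReal.ofReal_mul (Nat.cast_nonneg _)]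
  rw [lintegral_const_mul _ (by fun_prop), lintegral_pi_Ici_prod_div_add_sum_pow n 0 hX one_pos,
    ← ENNReal.ofReal_mul (by positivity)]
  simp [Nat.factorial_ne_zero]

theorem stmt7 (n : ℕ) (hn : 1 ≤ n) (X : Fin n → ℝ) (hX : ∀ i, 0 < X i) :
    ∫ a in Set.univ.pi (fun _ : Fin n => Set.Ici (0 : ℝ)),
        (n.factorial : ℝ) * (∏ i, X i) / (1 + ∑ i, a i * X i) ^ (n + 1) = 1 :=
  stmt7_general n X hX
end

section
/- Let ℓ be a positive integer and x₁, x₂ > 0 real. Then lim_{m→∞} ∑_{a₁ ≥ mℓ, a₂ ≥ 1} 2m·x₁x₂/(m + a₁x₁ + a₂x₂)³ = 1/(1 + ℓx₁), where the double sum is over integer pairs (a₁, a₂) with a₁ ≥ mℓ and a₂ ≥ 1. -/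
/-!
With `A = 1 + ℓ x₁`, the `m`-th sum is `m · T(m A)`, where
`T(d) = ∑ 2 x₁ x₂ / (d + a₁ x₁ + (a₂ + 1) x₂)³` is a Riemann sum for
`∫∫_{u, v ≥ 0} 2 / (d + u + v)³ du dv = 1 / d`.
Comparing each one-variable series `∑ (n + 1) x / (e + a x)^(n + 2)` with the telescoping
differences of `1 / (e + a x)^(n + 1)` gives `1 / (d + x₂) ≤ T(d) ≤ x₁ / d² + 1 / d`,
and both bounds, multiplied by `m` at `d = m A`, tend to `1 / A`.
-/

open Filter Topology Finset

section PowDiff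
variable {R : Type*} [CommRing R] [LinearOrder R] [IsStrictOrderedRing R] {s x : R}

lemma succ_mul_mul_pow_le_add_pow_sub_pow (hs : 0 ≤ s) (hx : 0 ≤ x) (n : ℕ) :
    (n + 1) * x * s ^ n ≤ (s + x) ^ (n + 1) - s ^ (n + 1) := by
  rw [← geom_sum₂_mul, add_sub_cancel_left, mul_right_comm]
  refine mul_le_mul_of_nonneg_right ?_ hx
  have h := card_nsmul_le_sum (range (n + 1)) (fun i => (s + x) ^ i * s ^ (n + 1 - 1 - i)) (s ^ n)
    fun i hi => by
      calc s ^ n = s ^ i * s ^ (n + 1 - 1 - i) := by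
            rw [← pow_add]; congr 1; simp at hi; omega
        _ ≤ _ := by gcongr; simpa using hx
  simpa using h

lemma add_pow_sub_pow_le_succ_mul_mul_add_pow (hs : 0 ≤ s) (hx : 0 ≤ x) (n : ℕ) :
    (s + x) ^ (n + 1) - s ^ (n + 1) ≤ (n + 1) * x * (s + x) ^ n := by
  rw [← geom_sum₂_mul, add_sub_cancel_left, mul_right_comm]
  refine mul_le_mul_of_nonneg_right ?_ hx
  have h := sum_le_card_nsmul (range (n + 1)) (fun i => (s + x) ^ i * s ^ (n + 1 - 1 - i))
    ((s + x) ^ n) fun i hi => by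
      calc (s + x) ^ i * s ^ (n + 1 - 1 - i) ≤ (s + x) ^ i * (s + x) ^ (n + 1 - 1 - i) := by
            gcongr; simpa using hx
        _ = (s + x) ^ n := by rw [← pow_add]; congr 1; simp at hi; omega
  simpa using h

end PowDiff

section InvPowDiff
variable {K : Type*} [Field K] [LinearOrder K] [IsStrictOrderedRing K] {s x : K}

lemma succ_mul_div_add_pow_le_inv_pow_sub_inv_pow (hs : 0 < s) (hx : 0 ≤ x) (n : ℕ) :
    (n + 1) * x / (s + x) ^ (n + 2) ≤ (s ^ (n + 1))⁻¹ - ((s + x) ^ (n + 1))⁻¹ := by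
  rw [inv_sub_inv (by positivity) (by positivity), div_le_div_iff₀ (by positivity) (by positivity)]
  calc (n + 1) * x * (s ^ (n + 1) * (s + x) ^ (n + 1))
      = (n + 1) * x * s ^ n * s * (s + x) ^ (n + 1) := by ring
    _ ≤ ((s + x) ^ (n + 1) - s ^ (n + 1)) * (s + x) * (s + x) ^ (n + 1) := by
      have h := succ_mul_mul_pow_le_add_pow_sub_pow hs.le hx n
      have h0 : 0 ≤ (s + x) ^ (n + 1) - s ^ (n + 1) := (by positivity : (0 : K) ≤ _).trans h
      gcongr
      exact le_add_of_nonneg_right hx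
    _ = ((s + x) ^ (n + 1) - s ^ (n + 1)) * (s + x) ^ (n + 2) := by ring

lemma inv_pow_sub_inv_pow_le_succ_mul_div_pow (hs : 0 < s) (hx : 0 ≤ x) (n : ℕ) :
    (s ^ (n + 1))⁻¹ - ((s + x) ^ (n + 1))⁻¹ ≤ (n + 1) * x / s ^ (n + 2) := by
  rw [inv_sub_inv (by positivity) (by positivity), div_le_div_iff₀ (by positivity) (by positivity)]
  calc ((s + x) ^ (n + 1) - s ^ (n + 1)) * s ^ (n + 2)
      ≤ (n + 1) * x * (s + x) ^ n * s * s ^ (n + 1) := by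
        rw [pow_succ' s (n + 1), ← mul_assoc]
        gcongr
        exact add_pow_sub_pow_le_succ_mul_mul_add_pow hs.le hx n
    _ ≤ (n + 1) * x * (s + x) ^ n * (s + x) * s ^ (n + 1) := by
      gcongr
      exact le_add_of_nonneg_right hx
    _ = (n + 1) * x * (s ^ (n + 1) * (s + x) ^ (n + 1)) := by ring

end InvPowDiff

section Telescoping
variable {f F : ℕ → ℝ}

lemma le_tsum_of_sub_succ_le (hF : Tendsto F atTop (𝓝 0)) (hf : Summable f)
    (h : ∀ n, F n - F (n + 1) ≤ f n) : F 0 ≤ ∑' n, f n := by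
  have hpartial (n : ℕ) : F 0 - F n ≤ ∑ i ∈ range n, f i := by
    rw [← sum_range_sub']
    exact sum_le_sum fun i _ => h i
  exact le_of_tendsto_of_tendsto' (by simpa using tendsto_const_nhds.sub hF)
    hf.hasSum.tendsto_sum_nat hpartial

lemma summable_and_tsum_le_of_le_sub_succ (hF : Tendsto F atTop (𝓝 0)) (hf : ∀ n, 0 ≤ f n)
    (h : ∀ n, f n ≤ F n - F (n + 1)) : Summable f ∧ ∑' n, f n ≤ F 0 := by
  have hanti : Antitone F := antitone_nat_of_succ_le fun n => by linarith [hf n, h n]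
  have hpartial (n : ℕ) : ∑ i ∈ range n, f i ≤ F 0 := by
    calc ∑ i ∈ range n, f i ≤ F 0 - F n := by
          rw [← sum_range_sub']
          exact sum_le_sum fun i _ => h i
      _ ≤ F 0 := sub_le_self _ (hanti.le_of_tendsto hF n)
  exact ⟨summable_of_sum_range_le hf hpartial, Real.tsum_le_of_sum_range_le hf hpartial⟩

end Telescoping

section Series
variable {e x : ℝ} (n : ℕ)

lemma tendsto_inv_add_mul_pow_atTop (hx : 0 < x) :
    Tendsto (fun a : ℕ => ((e + a * x) ^ (n + 1))⁻¹) atTop (𝓝 0) :=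
  tendsto_inv_atTop_zero.comp <| (tendsto_pow_atTop n.succ_ne_zero).comp <|
    tendsto_atTop_add_const_left _ e (tendsto_natCast_atTop_atTop.atTop_mul_const hx)

lemma summable_and_tsum_succ_mul_div_add_succ_mul_pow_le (he : 0 < e) (hx : 0 < x) :
    Summable (fun a : ℕ => (n + 1) * x / (e + (a + 1) * x) ^ (n + 2)) ∧
      ∑' a : ℕ, (n + 1) * x / (e + (a + 1) * x) ^ (n + 2) ≤ (e ^ (n + 1))⁻¹ := by
  have h := summable_and_tsum_le_of_le_sub_succ (tendsto_inv_add_mul_pow_atTop n hx)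
    (f := fun a : ℕ => (n + 1) * x / (e + (a + 1) * x) ^ (n + 2)) (fun a => by positivity)
    fun a => by
      have hs : e + ((a + 1 : ℕ) : ℝ) * x = e + a * x + x := by push_cast; ring
      rw [hs, show e + ((a : ℝ) + 1) * x = e + a * x + x by ring]
      exact succ_mul_div_add_pow_le_inv_pow_sub_inv_pow (by positivity) hx.le n
  simpa using h

lemma summable_succ_mul_div_add_mul_pow (he : 0 < e) (hx : 0 < x) :
    Summable (fun a : ℕ => (n + 1) * x / (e + a * x) ^ (n + 2)) := by
  refine (summable_nat_add_iff 1).1 ?_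
  simpa using (summable_and_tsum_succ_mul_div_add_succ_mul_pow_le n he hx).1

lemma inv_pow_le_tsum_succ_mul_div_add_mul_pow (he : 0 < e) (hx : 0 < x) :
    (e ^ (n + 1))⁻¹ ≤ ∑' a : ℕ, (n + 1) * x / (e + a * x) ^ (n + 2) := by
  have h := le_tsum_of_sub_succ_le (tendsto_inv_add_mul_pow_atTop n hx)
    (summable_succ_mul_div_add_mul_pow n he hx) fun a => by
      have hs : e + ((a + 1 : ℕ) : ℝ) * x = e + a * x + x := by push_cast; ring
      rw [hs]
      exact inv_pow_sub_inv_pow_le_succ_mul_div_pow (by positivity) hx.le n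
  simpa using h

end Series

section DoubleSum
variable {d x₁ x₂ : ℝ}

lemma bounds_tsum_two_mul_div_cube (hd : 0 < d) (hx₁ : 0 ≤ x₁) (hx₂ : 0 < x₂) (a₁ : ℕ) :
    x₁ / (d + x₂ + a₁ * x₁) ^ 2 ≤ ∑' a₂ : ℕ, 2 * x₁ * x₂ / (d + a₁ * x₁ + (a₂ + 1) * x₂) ^ 3 ∧
      ∑' a₂ : ℕ, 2 * x₁ * x₂ / (d + a₁ * x₁ + (a₂ + 1) * x₂) ^ 3 ≤ x₁ / (d + a₁ * x₁) ^ 2 := by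
  have hs : 0 < d + a₁ * x₁ := by positivity
  have hlow :=
    inv_pow_le_tsum_succ_mul_div_add_mul_pow 1 (e := d + a₁ * x₁ + x₂) (by positivity) hx₂
  have hup := (summable_and_tsum_succ_mul_div_add_succ_mul_pow_le 1 hs hx₂).2
  norm_num at hlow hup
  have hfactor : ∑' a₂ : ℕ, 2 * x₁ * x₂ / (d + a₁ * x₁ + (a₂ + 1) * x₂) ^ 3 =
      x₁ * ∑' a₂ : ℕ, 2 * x₂ / (d + a₁ * x₁ + (a₂ + 1) * x₂) ^ 3 := by
    rw [← tsum_mul_left]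
    exact tsum_congr fun a₂ => by ring
  rw [hfactor, div_eq_mul_inv, div_eq_mul_inv, add_right_comm d x₂]
  constructor
  · gcongr
    exact hlow.trans_eq (tsum_congr fun a => by ring)
  · gcongr

lemma bounds_tsum_tsum_two_mul_div_cube (hd : 0 < d) (hx₁ : 0 < x₁) (hx₂ : 0 < x₂) :
    (d + x₂)⁻¹ ≤ ∑' a₁ : ℕ, ∑' a₂ : ℕ, 2 * x₁ * x₂ / (d + a₁ * x₁ + (a₂ + 1) * x₂) ^ 3 ∧
      ∑' a₁ : ℕ, ∑' a₂ : ℕ, 2 * x₁ * x₂ / (d + a₁ * x₁ + (a₂ + 1) * x₂) ^ 3 ≤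
        x₁ / d ^ 2 + d⁻¹ := by
  have hinner := bounds_tsum_two_mul_div_cube hd hx₁.le hx₂
  have hlow := inv_pow_le_tsum_succ_mul_div_add_mul_pow 0 (e := d + x₂) (by positivity) hx₁
  have hsum_low := summable_succ_mul_div_add_mul_pow 0 (e := d + x₂) (by positivity) hx₁
  have hsum_up := summable_succ_mul_div_add_mul_pow 0 hd hx₁
  have htail := summable_and_tsum_succ_mul_div_add_succ_mul_pow_le 0 hd hx₁
  norm_num at hlow hsum_low hsum_up htail
  have hsum : Summable fun a₁ : ℕ =>
      ∑' a₂ : ℕ, 2 * x₁ * x₂ / (d + a₁ * x₁ + (a₂ + 1) * x₂) ^ 3 :=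
    hsum_up.of_nonneg_of_le (fun a₁ => (by positivity : (0 : ℝ) ≤ _).trans (hinner a₁).1)
      fun a₁ => (hinner a₁).2
  constructor
  · exact hlow.trans (hsum_low.tsum_le_tsum (fun a₁ => (hinner a₁).1) hsum)
  · calc _ ≤ ∑' a₁ : ℕ, x₁ / (d + a₁ * x₁) ^ 2 :=
          hsum.tsum_le_tsum (fun a₁ => (hinner a₁).2) hsum_up
      _ = x₁ / d ^ 2 + ∑' a₁ : ℕ, x₁ / (d + (a₁ + 1) * x₁) ^ 2 := by
        rw [hsum_up.tsum_eq_zero_add]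
        norm_num
      _ ≤ x₁ / d ^ 2 + d⁻¹ := by gcongr; exact htail.2

end DoubleSum

theorem stmt10_general (ℓ : ℕ) (x₁ x₂ : ℝ) (hx₁ : 0 < x₁) (hx₂ : 0 < x₂) :
    Tendsto (fun m : ℕ =>
        ∑' a₁ : ℕ, ∑' a₂ : ℕ,
          2 * (m : ℝ) * x₁ * x₂ /
            ((m : ℝ) + ((a₁ : ℝ) + (m * ℓ : ℕ)) * x₁ + ((a₂ : ℝ) + 1) * x₂) ^ 3) atTop
      (nhds (1 / (1 + ℓ * x₁))) := by
  set A : ℝ := 1 + ℓ * x₁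
  have hA : 0 < A := by positivity
  have hscale (m : ℕ) : (∑' a₁ : ℕ, ∑' a₂ : ℕ, 2 * (m : ℝ) * x₁ * x₂ /
        ((m : ℝ) + ((a₁ : ℝ) + (m * ℓ : ℕ)) * x₁ + ((a₂ : ℝ) + 1) * x₂) ^ 3) =
      (m : ℝ) * ∑' a₁ : ℕ, ∑' a₂ : ℕ, 2 * x₁ * x₂ / (m * A + a₁ * x₁ + (a₂ + 1) * x₂) ^ 3 := by
    simp_rw [← tsum_mul_left]
    exact tsum_congr fun a₁ => tsum_congr fun a₂ => by push_cast; ring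
  have hbounds (m : ℕ) (hm : 0 < m) :=
    bounds_tsum_tsum_two_mul_div_cube (d := m * A) (by positivity) hx₁ hx₂
  simp_rw [hscale, one_div]
  refine tendsto_of_tendsto_of_tendsto_of_le_of_le'
    (g := fun m : ℕ => A⁻¹ * (m / (m + x₂ / A))) (h := fun m : ℕ => A⁻¹ + x₁ / A ^ 2 / m)
    (by simpa using (tendsto_natCast_div_add_atTop (x₂ / A)).const_mul A⁻¹)
    (by simpa using (tendsto_const_div_atTop_nhds_zero_nat (x₁ / A ^ 2)).const_add A⁻¹) ?_ ?_
  · filter_upwards [eventually_gt_atTop 0] with m hm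
    calc A⁻¹ * (m / (m + x₂ / A)) = m * (m * A + x₂)⁻¹ := by field_simp
      _ ≤ _ := by gcongr; exact (hbounds m hm).1
  · filter_upwards [eventually_gt_atTop 0] with m hm
    calc _ ≤ m * (x₁ / (m * A) ^ 2 + (m * A)⁻¹) := by gcongr; exact (hbounds m hm).2
      _ = A⁻¹ + x₁ / A ^ 2 / m := by
        have hm' : (m : ℝ) ≠ 0 := by positivity
        field_simp
        ring

theorem stmt10 (ℓ : ℕ) (hℓ : 0 < ℓ) (x₁ x₂ : ℝ) (hx₁ : 0 < x₁) (hx₂ : 0 < x₂) :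
    Tendsto (fun m : ℕ =>
        ∑' a₁ : ℕ, ∑' a₂ : ℕ,
          2 * (m : ℝ) * x₁ * x₂ /
            ((m : ℝ) + ((a₁ : ℝ) + (m * ℓ : ℕ)) * x₁ + ((a₂ : ℝ) + 1) * x₂) ^ 3) atTop
      (nhds (1 / (1 + ℓ * x₁))) :=
  stmt10_general ℓ x₁ x₂ hx₁ hx₂
end

section
/- Let ℓ₁, ℓ₂ be positive integers and let N = {(u,v) ∈ ℝ²_{≥0} : u/ℓ₁ + v/ℓ₂ ≤ 1} be the Newton region for the diagonal ideal (x₁^{ℓ₁}, x₂^{ℓ₂}). Then for positive reals X₁, X₂, ∫_{N} 2X₁X₂/(1 + uX₁ + vX₂)³ du dv = ℓ₁ℓ₂X₁X₂/((1+ℓ₁X₁)(1+ℓ₂X₂)). -/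
open MeasureTheory Set

lemma contOn_sq_inv {a b L : ℝ} (hpos : ∀ u ∈ Icc (0:ℝ) L, 0 < a + b * u) :
    ContinuousOn (fun u : ℝ => ((a + b * u) ^ 2)⁻¹) (Icc 0 L) := by
  apply ContinuousOn.inv₀ (by fun_prop)
  intro u hu
  exact pow_ne_zero _ (hpos u hu).ne'

lemma intInt_sq_inv {a b L : ℝ} (hL : 0 ≤ L) (hpos : ∀ u ∈ Icc (0:ℝ) L, 0 < a + b * u) :
    IntervalIntegrable (fun u : ℝ => ((a + b * u) ^ 2)⁻¹) volume 0 L := by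
  have h := contOn_sq_inv hpos
  rw [← uIcc_of_le hL] at h
  exact h.intervalIntegrable

lemma integral_sq_inv {a b L : ℝ} (ha : 0 < a) (hL : 0 ≤ L)
    (hpos : ∀ u ∈ Icc (0:ℝ) L, 0 < a + b * u) :
    ∫ u in (0:ℝ)..L, ((a + b * u) ^ 2)⁻¹ = L / (a * (a + b * L)) := by
  have haL : 0 < a + b * L := hpos L ⟨hL, le_refl L⟩
  rcases eq_or_ne b 0 with hb | hb
  · subst hb
    simp only [zero_mul, add_zero]
    rw [intervalIntegral.integral_const, smul_eq_mul]
    field_simp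
    ring
  · rw [intervalIntegral.integral_eq_sub_of_hasDerivAt
      (f := fun u => -b⁻¹ * (a + b * u)⁻¹)
      (fun u hu => by
        rw [uIcc_of_le hL] at hu
        have h0 : a + b * u ≠ 0 := (hpos u hu).ne'
        have h1 : HasDerivAt (fun u : ℝ => a + b * u) b u := by
          simpa using ((hasDerivAt_id u).const_mul b).const_add a
        have h2 := (h1.inv h0).const_mul (-b⁻¹)
        convert h2 using 1
        rfl
        rfl
        field_simp)
      (intInt_sq_inv hL hpos)]
    simp only [mul_zero, add_zero]
    field_simp
    ring

lemma intInt_cube_inv {a b L : ℝ} (hL : 0 ≤ L) (hpos : ∀ u ∈ Icc (0:ℝ) L, 0 < a + b * u) :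
    IntervalIntegrable (fun u : ℝ => ((a + b * u) ^ 3)⁻¹) volume 0 L := by
  apply ContinuousOn.intervalIntegrable
  rw [uIcc_of_le hL]
  apply ContinuousOn.inv₀ (by fun_prop)
  intro u hu
  exact pow_ne_zero _ (hpos u hu).ne'

lemma integral_cube_inv {a b c : ℝ} (ha : 0 < a) (hb : 0 < b) (hc : 0 ≤ c) :
    ∫ v in (0:ℝ)..c, ((a + b * v) ^ 3)⁻¹
      = (2 * b)⁻¹ * ((a ^ 2)⁻¹ - ((a + b * c) ^ 2)⁻¹) := by
  have hpos : ∀ v ∈ Icc (0:ℝ) c, 0 < a + b * v := fun v hv => by nlinarith [hv.1]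
  rw [intervalIntegral.integral_eq_sub_of_hasDerivAt
    (f := fun v => -(2 * b)⁻¹ * ((a + b * v) ^ 2)⁻¹)
    (fun v hv => by
      rw [uIcc_of_le hc] at hv
      have h0 : a + b * v ≠ 0 := (hpos v hv).ne'
      have h1 : HasDerivAt (fun v : ℝ => a + b * v) b v := by
        simpa using ((hasDerivAt_id v).const_mul b).const_add a
      have h2 := (((h1.pow 2).inv (pow_ne_zero _ h0)).const_mul (-(2 * b)⁻¹))
      convert h2 using 1
      rfl
      rfl
      simp only [Pi.pow_apply]
      field_simp
      ring)
    (intInt_cube_inv hc hpos)]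
  have : a + b * 0 = a := by ring
  rw [this]
  ring

set_option maxHeartbeats 1000000 in
theorem stmt12 (ℓ₁ ℓ₂ : ℕ) (hℓ₁ : 0 < ℓ₁) (hℓ₂ : 0 < ℓ₂) (X₁ X₂ : ℝ)
    (hX₁ : 0 < X₁) (hX₂ : 0 < X₂) :
    ∫ p in {p : ℝ × ℝ | 0 ≤ p.1 ∧ 0 ≤ p.2 ∧ p.1 / ℓ₁ + p.2 / ℓ₂ ≤ 1},
        2 * X₁ * X₂ / (1 + p.1 * X₁ + p.2 * X₂) ^ 3
      = ℓ₁ * ℓ₂ * X₁ * X₂ / ((1 + ℓ₁ * X₁) * (1 + ℓ₂ * X₂)) := by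
  have hL1 : (0:ℝ) < ℓ₁ := by exact_mod_cast hℓ₁
  have hL2 : (0:ℝ) < ℓ₂ := by exact_mod_cast hℓ₂
  set L₁ : ℝ := (ℓ₁ : ℝ) with hL₁def
  set L₂ : ℝ := (ℓ₂ : ℝ) with hL₂def
  set c : ℝ → ℝ := fun u => L₂ * (1 - u / L₁) with hc
  set f : ℝ × ℝ → ℝ := fun p => 2 * X₁ * X₂ / (1 + p.1 * X₁ + p.2 * X₂) ^ 3 with hf
  set s : Set (ℝ × ℝ) := {p : ℝ × ℝ | 0 ≤ p.1 ∧ 0 ≤ p.2 ∧ p.1 / L₁ + p.2 / L₂ ≤ 1} with hs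
  obtain ⟨A, hA⟩ : ∃ A : ℝ, A = 1 + L₂ * X₂ := ⟨_, rfl⟩
  obtain ⟨B, hB⟩ : ∃ B : ℝ, B = X₁ - L₂ * X₂ / L₁ := ⟨_, rfl⟩
  -- membership characterization
  have hcval : ∀ u, L₁ * c u = L₁ * L₂ - L₂ * u := fun u => by
    rw [hc]; field_simp
  have hmem : ∀ u v : ℝ, ((u, v) ∈ s ↔ (u ∈ Set.Icc 0 L₁ ∧ v ∈ Set.Icc 0 (c u))) := by
    intro u v
    simp only [hs, Set.mem_setOf_eq, Set.mem_Icc]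
    have hdiv : u / L₁ + v / L₂ ≤ 1 ↔ L₂ * u + L₁ * v ≤ L₁ * L₂ := by
      rw [div_add_div _ _ hL1.ne' hL2.ne', div_le_one (by positivity)]
      constructor <;> intro h <;> nlinarith
    have hcle : v ≤ c u ↔ L₁ * v ≤ L₁ * L₂ - L₂ * u := by
      rw [← hcval u, mul_le_mul_iff_right₀ hL1]
    rw [hdiv, hcle]
    constructor
    · rintro ⟨h1, h2, h3⟩
      exact ⟨⟨h1, by nlinarith⟩, h2, by nlinarith⟩
    · rintro ⟨⟨h1, h1'⟩, h2, h3⟩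
      exact ⟨h1, h2, by nlinarith⟩
  have hclosed : IsClosed s := by
    have : s = {p : ℝ × ℝ | 0 ≤ p.1} ∩ {p : ℝ × ℝ | 0 ≤ p.2}
        ∩ {p : ℝ × ℝ | p.1 / L₁ + p.2 / L₂ ≤ 1} := by
      ext p; simp [hs, Set.mem_setOf_eq, and_assoc]
    rw [this]
    exact ((isClosed_le continuous_const continuous_fst).inter
      (isClosed_le continuous_const continuous_snd)).inter
      (isClosed_le ((continuous_fst.div_const L₁).add (continuous_snd.div_const L₂))
        continuous_const)
  have hcompact : IsCompact s := by
    apply IsCompact.of_isClosed_subset (isCompact_Icc (a := ((0:ℝ), (0:ℝ)))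
      (b := (L₁, L₂))) hclosed
    rintro ⟨u, v⟩ hp
    obtain ⟨⟨hu0, hu1⟩, hv0, hv1⟩ := ((hmem u v).1 hp : _)
    have hdu : 0 ≤ u / L₁ := div_nonneg hu0 hL1.le
    constructor <;> constructor
    · exact hu0
    · exact hv0
    · exact hu1
    · have : c u ≤ L₂ := by rw [hc]; nlinarith
      linarith
  have hconts : ContinuousOn f s := by
    apply ContinuousOn.div continuousOn_const (by fun_prop)
    intro p hp
    have h1 : 0 ≤ p.1 := hp.1
    have h2 : 0 ≤ p.2 := hp.2.1
    have : (0:ℝ) < 1 + p.1 * X₁ + p.2 * X₂ := by nlinarith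
    exact pow_ne_zero _ this.ne'
  have hint : IntegrableOn f s := hconts.integrableOn_compact hcompact
  have hind : Integrable (s.indicator f) volume :=
    (integrable_indicator_iff hclosed.measurableSet).2 hint
  have hAB : ∀ u : ℝ, 1 + u * X₁ + X₂ * c u = A + B * u := fun u => by
    rw [hc, hA, hB]; field_simp; ring
  -- inner integral
  have hinner : ∀ u : ℝ, (∫ v, s.indicator f (u, v))
      = (Set.Icc 0 L₁).indicator
          (fun u => X₁ * (((1 + X₁ * u) ^ 2)⁻¹ - ((A + B * u) ^ 2)⁻¹)) u := by
    intro u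
    by_cases hu : u ∈ Set.Icc 0 L₁
    · have hdu : u / L₁ ≤ 1 := (div_le_one hL1).2 hu.2
      have hcu : 0 ≤ c u := by rw [hc]; nlinarith
      have ha : (0:ℝ) < 1 + u * X₁ := by nlinarith [hu.1]
      rw [Set.indicator_of_mem hu]
      have heq : (fun v => s.indicator f (u, v))
          = (Set.Icc 0 (c u)).indicator (fun v => f (u, v)) := by
        funext v
        by_cases hv : v ∈ Set.Icc 0 (c u)
        · rw [Set.indicator_of_mem ((hmem u v).2 ⟨hu, hv⟩), Set.indicator_of_mem hv]
        · rw [Set.indicator_of_notMem (fun hm => hv ((hmem u v).1 hm).2),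
            Set.indicator_of_notMem hv]
      rw [heq, integral_indicator measurableSet_Icc,
        integral_Icc_eq_integral_Ioc, ← intervalIntegral.integral_of_le hcu]
      have hfe : ∀ v : ℝ, f (u, v) = (2 * X₁ * X₂) * (((1 + u * X₁) + X₂ * v) ^ 3)⁻¹ := by
        intro v; rw [hf]; simp only [div_eq_mul_inv]; ring_nf
      simp_rw [hfe]
      rw [intervalIntegral.integral_const_mul, integral_cube_inv ha hX₂ hcu,
        hAB u]
      have h2X : (2 * X₂) ≠ 0 := by positivity
      have hcancel : ∀ D : ℝ, 2 * X₁ * X₂ * ((2 * X₂)⁻¹ * D) = X₁ * D := fun D => by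
        calc 2 * X₁ * X₂ * ((2 * X₂)⁻¹ * D) = X₁ * D * (2 * X₂ * (2 * X₂)⁻¹) := by ring
          _ = X₁ * D := by rw [mul_inv_cancel₀ h2X, mul_one]
      rw [hcancel]
      ring_nf
    · rw [Set.indicator_of_notMem hu]
      have : (fun v => s.indicator f (u, v)) = fun _ => (0:ℝ) :=
        funext fun v => Set.indicator_of_notMem (fun hm => hu ((hmem u v).1 hm).1) _
      rw [this, integral_zero]
  have hApos : (0:ℝ) < A := by rw [hA]; nlinarith
  have hpos1 : ∀ u ∈ Set.Icc (0:ℝ) L₁, 0 < 1 + X₁ * u := fun u hu => by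
    nlinarith [hu.1]
  have hposAB : ∀ u ∈ Set.Icc (0:ℝ) L₁, 0 < A + B * u := fun u hu => by
    rw [show A + B * u = 1 + u * X₁ + X₂ * c u from (hAB u).symm]
    have hdu : u / L₁ ≤ 1 := (div_le_one hL1).2 hu.2
    have hcu : 0 ≤ c u := by rw [hc]; nlinarith
    nlinarith [hu.1]
  have hABL : A + B * L₁ = 1 + X₁ * L₁ := by rw [hA, hB]; field_simp; ring
  calc ∫ p in s, f p = ∫ p, s.indicator f p := (integral_indicator hclosed.measurableSet).symm
    _ = ∫ u, ∫ v, s.indicator f (u, v) := by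
        rw [MeasureTheory.Measure.volume_eq_prod, integral_prod]
        rwa [← MeasureTheory.Measure.volume_eq_prod]
    _ = ∫ u, (Set.Icc 0 L₁).indicator
          (fun u => X₁ * (((1 + X₁ * u) ^ 2)⁻¹ - ((A + B * u) ^ 2)⁻¹)) u := by
        simp_rw [hinner]
    _ = ∫ u in (0:ℝ)..L₁, X₁ * (((1 + X₁ * u) ^ 2)⁻¹ - ((A + B * u) ^ 2)⁻¹) := by
        rw [integral_indicator measurableSet_Icc, integral_Icc_eq_integral_Ioc,
          ← intervalIntegral.integral_of_le hL1.le]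
    _ = X₁ * (L₁ / (1 * (1 + X₁ * L₁)) - L₁ / (A * (A + B * L₁))) := by
        rw [intervalIntegral.integral_const_mul,
          intervalIntegral.integral_sub (intInt_sq_inv hL1.le hpos1)
            (intInt_sq_inv hL1.le hposAB),
          integral_sq_inv one_pos hL1.le hpos1, integral_sq_inv hApos hL1.le hposAB]
    _ = L₁ * L₂ * X₁ * X₂ / ((1 + L₁ * X₁) * (1 + L₂ * X₂)) := by
        rw [hABL, hA]
        have h1 : (0:ℝ) < 1 + X₁ * L₁ := by nlinarith
        have h2 : (0:ℝ) < 1 + L₂ * X₂ := by nlinarith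
        field_simp
        ring
end

section
/- For positive reals x₁, x₂ and positive integers ℓ₁, ℓ₂, the following limit identity holds: 1 + lim_{m→∞} (m x₁/x₂²)·( ∑_{a₁=1}^{mℓ₁−1} Ψ₂(mℓ₂ − ⌊a₁ℓ₂/ℓ₁⌋ + (m + a₁x₁)/x₂) + ∑_{a₁ ≥ mℓ₁} Ψ₂(1 + (m + a₁x₁)/x₂) ) = ℓ₁ℓ₂x₁x₂/((1+ℓ₁x₁)(1+ℓ₂x₂)), where Ψ₂(y) = −2∑_{a≥0} 1/(a+y)³. -/
/-!
Write g = −Ψ₂, so g(y) = 2 ∑ₐ 1/(a + y)³. Comparing termwise with the telescoping series of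
1/(y + a)² gives 1/y² ≤ g(y) ≤ 1/(y − 1)² for y > 1, and the limits depend only on these
bounds. With them each term is squeezed between values of 1/(pq) for consecutive terms p, q
of an arithmetic progression, and these telescope.

For 1 ≤ a < mℓ₁ the argument of the finite sum is mA + aB + θ with θ ∈ [0, 1), where
A = ℓ₂ + 1/x₂ and B = x₁/x₂ − ℓ₂/ℓ₁; hence m ∑ g → ℓ₁/(A(A + ℓ₁B)), a Riemann sum of
∫₀^ℓ₁ dt/(A + tB)². The arguments of the tail are 1 + mγ + ad with γ = (1 + ℓ₁x₁)/x₂ and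
d = x₁/x₂, so m ∑ g → 1/(γd). Since x₂A = 1 + ℓ₂x₂ and x₂(A + ℓ₁B) = 1 + ℓ₁x₁, the limit is
L = −ℓ₁x₁/((1 + ℓ₁x₁)(1 + ℓ₂x₂)) − 1/(1 + ℓ₁x₁), and 1 + L is the claimed value.
-/

open Filter Topology Finset

theorem hasSum_sub_succ_of_antitone {f : ℕ → ℝ} {l : ℝ} (hf : Antitone f)
    (hl : Tendsto f atTop (𝓝 l)) : HasSum (fun n => f n - f (n + 1)) (f 0 - l) := by
  rw [hasSum_iff_tendsto_nat_of_nonneg fun n => sub_nonneg.2 (hf n.le_succ)]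
  simpa only [Finset.sum_range_sub'] using tendsto_const_nhds.sub hl

theorem tendsto_affine_div_affine_natCast (a b c e : ℝ) (hc : c ≠ 0) :
    Tendsto (fun m : ℕ => (a * m + b) / (c * m + e)) atTop (𝓝 (a / c)) := by
  have h0 : Tendsto (fun m : ℕ => ((m : ℝ))⁻¹) atTop (𝓝 0) := tendsto_inv_atTop_nhds_zero_nat
  have h := ((h0.const_mul b).const_add a).div ((h0.const_mul e).const_add c) (by simpa)
  rw [mul_zero, add_zero, mul_zero, add_zero] at h
  refine h.congr' ?_
  filter_upwards [eventually_ne_atTop 0] with m hm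
  simp only [Pi.div_apply]
  field_simp

theorem natCast_nat_div_mem_Ioc (n k : ℕ) :
    ((n / k : ℕ) : ℝ) ∈ Set.Ioc ((n : ℝ) / k - 1) ((n : ℝ) / k) := by
  rw [← Nat.floor_div_eq_div (K := ℝ)]
  exact ⟨by linarith [Nat.lt_floor_add_one ((n : ℝ) / k)], Nat.floor_le (by positivity)⟩

theorem sum_Ico_one_div_consecutive_mul (c B : ℝ) {N : ℕ} (hN : 1 ≤ N)
    (h : ∀ a ∈ Icc 1 N, c + a * B ≠ 0) :
    ∑ a ∈ Ico 1 N, 1 / ((c + a * B) * (c + (a + 1) * B)) = (N - 1) / ((c + B) * (c + N * B)) := by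
  induction N, hN using Nat.le_induction with
  | base => simp
  | succ N hN ih =>
    have h1 := h 1 (mem_Icc.2 ⟨le_rfl, by omega⟩)
    have hN' := h N (mem_Icc.2 ⟨hN, N.le_succ⟩)
    have hN1 := h (N + 1) (mem_Icc.2 ⟨by omega, le_rfl⟩)
    rw [sum_Ico_succ_top hN, ih fun a ha => h a (Icc_subset_Icc_right N.le_succ ha)]
    push_cast at h1 hN1 ⊢
    rw [one_mul] at h1
    rw [div_add_div _ _ (mul_ne_zero h1 hN') (mul_ne_zero hN' hN1),
      div_eq_div_iff (mul_ne_zero (mul_ne_zero h1 hN') (mul_ne_zero hN' hN1)) (mul_ne_zero h1 hN1)]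
    ring

theorem hasSum_one_div_consecutive_mul {c d : ℝ} (hc : 0 < c) (hd : 0 < d) :
    HasSum (fun a : ℕ => 1 / ((c + a * d) * (c + (a + 1) * d))) (1 / (c * d)) := by
  have anti : Antitone fun a : ℕ => 1 / (d * (c + a * d)) := fun a b hab =>
    one_div_le_one_div_of_le (by positivity) (by gcongr)
  have lim : Tendsto (fun a : ℕ => 1 / (d * (c + a * d))) atTop (𝓝 0) :=
    tendsto_const_nhds.div_atTop (Tendsto.const_mul_atTop hd
      (tendsto_atTop_add_const_left _ c (tendsto_natCast_atTop_atTop.atTop_mul_const hd)))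
  convert hasSum_sub_succ_of_antitone anti lim using 1
  · ext a
    push_cast
    field_simp
    ring
  · simp [mul_comm]

def InvSqSandwich (g : ℝ → ℝ) : Prop :=
  ∀ y, 1 < y → 1 / y ^ 2 ≤ g y ∧ g y ≤ 1 / (y - 1) ^ 2

theorem invSqSandwich_two_mul_tsum_one_div_cube :
    InvSqSandwich fun y => 2 * ∑' a : ℕ, 1 / ((a : ℝ) + y) ^ 3 := by
  intro y hy
  beta_reduce
  have telescope : ∀ z : ℝ, 0 < z →
      HasSum (fun a : ℕ => 1 / (z + a) ^ 2 - 1 / (z + (a + 1 : ℕ)) ^ 2) (1 / z ^ 2) := by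
    intro z hz
    have anti : Antitone fun a : ℕ => 1 / (z + a) ^ 2 := fun a b hab =>
      one_div_le_one_div_of_le (by positivity) (by gcongr)
    have lim : Tendsto (fun a : ℕ => 1 / (z + a) ^ 2) atTop (𝓝 0) :=
      tendsto_const_nhds.div_atTop ((tendsto_pow_atTop two_ne_zero).comp
        (tendsto_atTop_add_const_left _ z tendsto_natCast_atTop_atTop))
    simpa using hasSum_sub_succ_of_antitone anti lim
  have lower : ∀ a : ℕ,
      1 / (y + a) ^ 2 - 1 / (y + (a + 1 : ℕ)) ^ 2 ≤ 2 * (1 / ((a : ℝ) + y) ^ 3) := by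
    intro a
    have hu : 0 < (a : ℝ) + y := by positivity
    push_cast
    rw [div_sub_div _ _ (by positivity) (by positivity), mul_one_div,
      div_le_div_iff₀ (by positivity) (by positivity)]
    nlinarith [pow_pos hu 3, pow_pos hu 4]
  have upper : ∀ a : ℕ,
      2 * (1 / ((a : ℝ) + y) ^ 3) ≤ 1 / (y - 1 + a) ^ 2 - 1 / (y - 1 + (a + 1 : ℕ)) ^ 2 := by
    intro a
    have hu : 1 < (a : ℝ) + y := by linarith [a.cast_nonneg (α := ℝ)]
    push_cast
    rw [div_sub_div _ _ (by nlinarith) (by positivity), mul_one_div,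
      div_le_div_iff₀ (by positivity) (by nlinarith)]
    ring_nf
    nlinarith [pow_pos (by linarith : (0 : ℝ) < a + y) 3, pow_pos (by linarith : (0 : ℝ) < a + y) 2]
  have hsum : Summable fun a : ℕ => 2 * (1 / ((a : ℝ) + y) ^ 3) :=
    (telescope (y - 1) (by linarith)).summable.of_nonneg_of_le (fun a => by positivity) upper
  rw [← tsum_mul_left]
  exact ⟨hasSum_le lower (telescope y (by linarith)) hsum.hasSum,
    hasSum_le upper hsum.hasSum (telescope (y - 1) (by linarith))⟩

namespace InvSqSandwich

variable {g : ℝ → ℝ}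

theorem one_div_mul_le (hg : InvSqSandwich g) {y p q : ℝ} (hy : 1 < y) (hp : y ≤ p)
    (hq : y ≤ q) : 1 / (p * q) ≤ g y := by
  have hy0 : 0 < y := by linarith
  exact (one_div_le_one_div_of_le (by positivity) (by rw [sq]; gcongr; linarith)).trans (hg y hy).1

theorem le_one_div_mul (hg : InvSqSandwich g) {y p q : ℝ} (hp : 0 < p) (hq : 0 < q)
    (hpy : p ≤ y - 1) (hqy : q ≤ y - 1) : g y ≤ 1 / (p * q) :=
  (hg y (by linarith)).2.trans (one_div_le_one_div_of_le (mul_pos hp hq)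
    (by rw [sq]; exact mul_le_mul hpy hqy hq.le (by linarith)))

/-- The slack `1 + |B|` is what lets the two shifted progressions bracket `y a` at both `a` and
`a + 1`, whatever the sign of `B`. -/
theorem sum_Ico_bounds (hg : InvSqSandwich g) (c B : ℝ) {N : ℕ} (hN : 1 ≤ N) {y : ℕ → ℝ}
    (hy : ∀ a ∈ Ico 1 N, c + a * B ≤ y a ∧ y a ≤ c + a * B + 1)
    (hc : ∀ a ∈ Icc 1 N, 1 + |B| < c + a * B) :
    (N - 1) / ((c + (1 + |B|) + B) * (c + (1 + |B|) + N * B)) ≤ ∑ a ∈ Ico 1 N, g (y a) ∧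
      ∑ a ∈ Ico 1 N, g (y a) ≤ (N - 1) / ((c - (1 + |B|) + B) * (c - (1 + |B|) + N * B)) := by
  have hB := le_abs_self B
  have hB' := neg_abs_le B
  have hc' : ∀ a ∈ Ico 1 N, 1 + |B| < c + a * B ∧ 1 + |B| < c + (a + 1) * B := fun a ha =>
    ⟨hc a (Ico_subset_Icc_self ha), by
      simpa using hc (a + 1) (mem_Icc.2 ⟨by omega, (mem_Ico.1 ha).2⟩)⟩
  constructor
  · rw [← sum_Ico_one_div_consecutive_mul _ _ hN fun a ha => ne_of_gt (by linarith [hc a ha])]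
    refine sum_le_sum fun a ha => hg.one_div_mul_le ?_ ?_ ?_ <;> linarith [hy a ha, hc' a ha]
  · rw [← sum_Ico_one_div_consecutive_mul _ _ hN fun a ha => ne_of_gt (by linarith [hc a ha])]
    refine sum_le_sum fun a ha => hg.le_one_div_mul ?_ ?_ ?_ ?_ <;> linarith [hy a ha, hc' a ha]

theorem tendsto_mul_sum_Ico (hg : InvSqSandwich g) {A B : ℝ} {ℓ : ℕ} (hℓ : 0 < ℓ) (hA : 0 < A)
    (hAB : 0 < A + ℓ * B) {y : ℕ → ℕ → ℝ}
    (hy : ∀ m, ∀ a ∈ Ico 1 (m * ℓ), m * A + a * B ≤ y m a ∧ y m a ≤ m * A + a * B + 1) :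
    Tendsto (fun m : ℕ => (m : ℝ) * ∑ a ∈ Ico 1 (m * ℓ), g (y m a)) atTop
      (𝓝 (ℓ / (A * (A + ℓ * B)))) := by
  set s := 1 + |B|
  have bound_lim : ∀ σ : ℝ, Tendsto (fun m : ℕ => (m : ℝ) *
      ((m * ℓ - 1) / ((m * A + σ + B) * (m * A + σ + m * ℓ * B)))) atTop
        (𝓝 (ℓ / (A * (A + ℓ * B)))) := by
    intro σ
    convert (tendsto_affine_div_affine_natCast ℓ (-1) (A + ℓ * B) σ hAB.ne').mul
      (tendsto_affine_div_affine_natCast 1 0 A (σ + B) hA.ne') using 1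
    · ext m
      rw [div_mul_div_comm]
      ring
    · field_simp
  have hδ : 0 < min A (A + ℓ * B) := lt_min hA hAB
  have bounds : ∀ᶠ m : ℕ in atTop,
      (m : ℝ) * ((m * ℓ - 1) / ((m * A + s + B) * (m * A + s + m * ℓ * B))) ≤
          (m : ℝ) * ∑ a ∈ Ico 1 (m * ℓ), g (y m a) ∧
        (m : ℝ) * ∑ a ∈ Ico 1 (m * ℓ), g (y m a) ≤
          (m : ℝ) * ((m * ℓ - 1) / ((m * A - s + B) * (m * A - s + m * ℓ * B))) := by
    filter_upwards [eventually_ge_atTop 1,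
      tendsto_natCast_atTop_atTop.eventually_gt_atTop (s / min A (A + ℓ * B))] with m hm hms
    have hc : ∀ a ∈ Icc 1 (m * ℓ), s < m * A + a * B := by
      intro a ha
      have ha' : (a : ℝ) ≤ m * ℓ := by exact_mod_cast (mem_Icc.1 ha).2
      have hmin := (div_lt_iff₀ hδ).1 hms
      rcases le_total 0 B with hB | hB
      · nlinarith [min_le_left A (A + ℓ * B)]
      · nlinarith [min_le_right A (A + ℓ * B)]
    obtain ⟨hlo, hhi⟩ := hg.sum_Ico_bounds (m * A) B (Nat.mul_pos hm hℓ) (hy m) hc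
    push_cast at hlo hhi
    exact ⟨mul_le_mul_of_nonneg_left hlo m.cast_nonneg,
      mul_le_mul_of_nonneg_left hhi m.cast_nonneg⟩
  exact tendsto_of_tendsto_of_tendsto_of_le_of_le' (bound_lim s)
    (by simpa only [← sub_eq_add_neg] using bound_lim (-s))
    (bounds.mono fun _ h => h.1) (bounds.mono fun _ h => h.2)

theorem tsum_bounds (hg : InvSqSandwich g) {Z d : ℝ} (hd : 0 < d) (hZ : 1 + d < Z) :
    1 / (Z * d) ≤ ∑' a : ℕ, g (Z + a * d) ∧ ∑' a : ℕ, g (Z + a * d) ≤ 1 / ((Z - (1 + d)) * d) := by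
  have hZa : ∀ a : ℕ, Z ≤ Z + a * d := fun a => le_add_of_nonneg_right (by positivity)
  have hle : ∀ a : ℕ,
      g (Z + a * d) ≤ 1 / ((Z - (1 + d) + a * d) * (Z - (1 + d) + (a + 1) * d)) := fun a =>
    hg.le_one_div_mul (by linarith [hZa a]) (by linarith [hZa a]) (by linarith) (by linarith)
  have hge : ∀ a : ℕ, 1 / ((Z + a * d) * (Z + (a + 1) * d)) ≤ g (Z + a * d) := fun a =>
    hg.one_div_mul_le (by linarith [hZa a]) le_rfl (by linarith)
  have hup := hasSum_one_div_consecutive_mul (c := Z - (1 + d)) (by linarith) hd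
  have hlo := hasSum_one_div_consecutive_mul (c := Z) (by linarith) hd
  have hsum : Summable fun a : ℕ => g (Z + a * d) :=
    hup.summable.of_nonneg_of_le (fun a =>
      le_trans (one_div_nonneg.2 (mul_nonneg (by linarith [hZa a]) (by linarith [hZa a]))) (hge a))
      hle
  exact ⟨hasSum_le hge hlo hsum.hasSum, hasSum_le hle hsum.hasSum hup⟩

theorem tendsto_mul_tsum (hg : InvSqSandwich g) (c : ℝ) {γ d : ℝ} (hγ : 0 < γ) (hd : 0 < d) :
    Tendsto (fun m : ℕ => (m : ℝ) * ∑' a : ℕ, g (c + m * γ + a * d)) atTop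
      (𝓝 (1 / (γ * d))) := by
  have bound_lim : ∀ e : ℝ,
      Tendsto (fun m : ℕ => (m : ℝ) * (1 / ((c + m * γ - e) * d))) atTop (𝓝 (1 / (γ * d))) := by
    intro e
    convert tendsto_affine_div_affine_natCast 1 0 (γ * d) ((c - e) * d) (by positivity) using 2
    ring
  have bounds : ∀ᶠ m : ℕ in atTop,
      (m : ℝ) * (1 / ((c + m * γ - 0) * d)) ≤ (m : ℝ) * ∑' a : ℕ, g (c + m * γ + a * d) ∧
        (m : ℝ) * ∑' a : ℕ, g (c + m * γ + a * d) ≤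
          (m : ℝ) * (1 / ((c + m * γ - (1 + d)) * d)) := by
    filter_upwards [tendsto_natCast_atTop_atTop.eventually_gt_atTop ((1 + d - c) / γ)] with m hm
    obtain ⟨hlo, hhi⟩ := hg.tsum_bounds hd (Z := c + m * γ) (by linarith [(div_lt_iff₀ hγ).1 hm])
    rw [sub_zero]
    exact ⟨mul_le_mul_of_nonneg_left hlo m.cast_nonneg,
      mul_le_mul_of_nonneg_left hhi m.cast_nonneg⟩
  exact tendsto_of_tendsto_of_tendsto_of_le_of_le' (bound_lim 0) (bound_lim (1 + d))
    (bounds.mono fun _ h => h.1) (bounds.mono fun _ h => h.2)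

end InvSqSandwich

theorem stmt16_general (Ψ₂ : ℝ → ℝ)
    (hΨ : ∀ y : ℝ, 0 < y → Ψ₂ y = -2 * ∑' a : ℕ, 1 / ((a : ℝ) + y) ^ 3)
    (x₁ x₂ : ℝ) (hx₁ : 0 < x₁) (hx₂ : 0 < x₂) (ℓ₁ ℓ₂ : ℕ) (hℓ₁ : 0 < ℓ₁) :
    ∃ L : ℝ,
      Tendsto (fun m : ℕ =>
          ((m : ℝ) * x₁ / x₂ ^ 2) *
            ((∑ a₁ ∈ Finset.Ico 1 (m * ℓ₁),
                Ψ₂ ((m * ℓ₂ : ℕ) - ((a₁ * ℓ₂ / ℓ₁ : ℕ) : ℝ) + ((m : ℝ) + a₁ * x₁) / x₂)) +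
              ∑' a₁ : ℕ,
                Ψ₂ (1 + ((m : ℝ) + ((a₁ : ℝ) + (m * ℓ₁ : ℕ)) * x₁) / x₂))) atTop
        (nhds L) ∧
      1 + L = ℓ₁ * ℓ₂ * x₁ * x₂ / ((1 + ℓ₁ * x₁) * (1 + ℓ₂ * x₂)) := by
  have hg : InvSqSandwich fun y => -Ψ₂ y := fun y hy => by
    simpa [hΨ y (by linarith)] using invSqSandwich_two_mul_tsum_one_div_cube y hy
  have hℓ₁' : (0 : ℝ) < ℓ₁ := by exact_mod_cast hℓ₁
  have hγ : ℓ₂ + 1 / x₂ + ℓ₁ * (x₁ / x₂ - ℓ₂ / ℓ₁) = (1 + ℓ₁ * x₁) / x₂ := by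
    field_simp
    ring
  have hfin := hg.tendsto_mul_sum_Ico (A := ℓ₂ + 1 / x₂) (B := x₁ / x₂ - ℓ₂ / ℓ₁)
    (y := fun m a => ((m * ℓ₂ : ℕ) : ℝ) - ((a * ℓ₂ / ℓ₁ : ℕ) : ℝ) + ((m : ℝ) + a * x₁) / x₂) hℓ₁
    (by positivity) (by rw [hγ]; positivity) fun m a _ => by
      obtain ⟨hlo, hhi⟩ := natCast_nat_div_mem_Ioc (a * ℓ₂) ℓ₁
      push_cast at hlo hhi ⊢
      constructor <;> linarith [show (m : ℝ) * (ℓ₂ + 1 / x₂) + a * (x₁ / x₂ - ℓ₂ / ℓ₁)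
        = m * ℓ₂ + (m + a * x₁) / x₂ - a * ℓ₂ / ℓ₁ by ring]
  have htail := hg.tendsto_mul_tsum 1 (γ := (1 + ℓ₁ * x₁) / x₂) (d := x₁ / x₂)
    (by positivity) (by positivity)
  refine ⟨_, ((hfin.add htail).const_mul (-(x₁ / x₂ ^ 2))).congr fun m => ?_, ?_⟩
  · have htail_arg : ∀ a : ℕ, 1 + ((m : ℝ) + ((a : ℝ) + (m * ℓ₁ : ℕ)) * x₁) / x₂ =
        1 + m * ((1 + ℓ₁ * x₁) / x₂) + a * (x₁ / x₂) := fun a => by push_cast; ring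
    simp only [htail_arg, sum_neg_distrib, tsum_neg]
    ring
  · rw [hγ]
    field_simp
    ring

theorem stmt16 (Ψ₂ : ℝ → ℝ)
    (hΨ : ∀ y : ℝ, 0 < y → Ψ₂ y = -2 * ∑' a : ℕ, 1 / ((a : ℝ) + y) ^ 3)
    (x₁ x₂ : ℝ) (hx₁ : 0 < x₁) (hx₂ : 0 < x₂) (ℓ₁ ℓ₂ : ℕ) (hℓ₁ : 0 < ℓ₁) (hℓ₂ : 0 < ℓ₂) :
    ∃ L : ℝ,
      Tendsto (fun m : ℕ =>
          ((m : ℝ) * x₁ / x₂ ^ 2) *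
            ((∑ a₁ ∈ Finset.Ico 1 (m * ℓ₁),
                Ψ₂ ((m * ℓ₂ : ℕ) - ((a₁ * ℓ₂ / ℓ₁ : ℕ) : ℝ) + ((m : ℝ) + a₁ * x₁) / x₂)) +
              ∑' a₁ : ℕ,
                Ψ₂ (1 + ((m : ℝ) + ((a₁ : ℝ) + (m * ℓ₁ : ℕ)) * x₁) / x₂))) atTop
        (nhds L) ∧
      1 + L = ℓ₁ * ℓ₂ * x₁ * x₂ / ((1 + ℓ₁ * x₁) * (1 + ℓ₂ * x₂)) :=
  stmt16_general Ψ₂ hΨ x₁ x₂ hx₁ hx₂ ℓ₁ ℓ₂ hℓ₁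
end
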